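/- Let S be the finite transition semigroup of a DFA acting on state set Q. Then S is locally idempotent if and only if the following three conditions hold: (1) there is no pair of distinct states p, q and s ∈ S with p·s = q and q·s = p; (2) for every pair (p,q) having a common right unit e and every s ∈ S, if q is reachable from p·s then q is reachable from q·s; (3) there is no triple of pairwise distinct states p, q, r having a common right unit and an s ∈ S with p·s = q and q·s = r. -/

import Mathlib

def RightAction {Q S : Type*} [Semigroup S] (act : Q → S → Q) : Prop :=
  ∀ (q : Q) (s t : S), act (act q s) t = act q (s * t)

def Reach {Q S : Type*} (act : Q → S → Q) (x y : Q) : Prop :=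
  x = y ∨ ∃ t : S, act x t = y

def LocIdem (S : Type*) [Semigroup S] : Prop :=
  ∀ e s : S, e * e = e → (e * s * e) * (e * s * e) = e * s * e

def LocXYXeqXY (S : Type*) [Semigroup S] : Prop :=
  ∀ e a b : S, e * e = e →
    (e * a * e) * (e * b * e) * (e * a * e) = (e * a * e) * (e * b * e)

def LocXYXeqYX (S : Type*) [Semigroup S] : Prop :=
  ∀ e a b : S, e * e = e →
    (e * a * e) * (e * b * e) * (e * a * e) = (e * b * e) * (e * a * e)

/-!
If `S` is locally idempotent, every `t = e * s * e` with `e` idempotent is idempotent, so once a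
state `p` is sent to `q` by `t`, the state `q` is fixed by `t`. This forbids a swap `p ↔ q` (for
`e` an idempotent fixing `p` and `q`, which exists in the finite stabiliser semigroup containing
`s * s`), a chain `p ↦ q ↦ r`, and it makes `q` reachable from `q · s` whenever it is reachable
from `p · s`. Conversely, for `t = e * s * e` and any state `q`, the states `q · e`, `q · t` and
`q · t · t` are all fixed by `e`; unless the last two agree they form a swap or a chain, so
`t * t` and `t` act alike and are equal by faithfulness.
-/

theorem exists_idempotent_mem_of_finite {M : Type*} [Semigroup M] [Finite M] {s : Set M}
    (hs : s.Nonempty) (hmul : ∀ x ∈ s, ∀ y ∈ s, x * y ∈ s) : ∃ m ∈ s, m * m = m := by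
  let : TopologicalSpace M := ⊥
  have : DiscreteTopology M := ⟨rfl⟩
  exact exists_idempotent_in_compact_subsemigroup (fun _ => continuous_of_discreteTopology) s hs
    s.toFinite.isCompact hmul

section RightAction

variable {Q S : Type*} [Semigroup S] {act : Q → S → Q}

theorem RightAction.act_act_of_mul_self_eq (hact : RightAction act) {t : S} (ht : t * t = t)
    (p : Q) : act (act p t) t = act p t := by
  rw [hact, ht]

theorem RightAction.act_mul_of_act_eq (hact : RightAction act) {e : S} {p : Q}
    (hp : act p e = p) (x : S) : act p (e * x) = act p x := by
  rw [← hact, hp]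

theorem RightAction.act_sandwich (hact : RightAction act) {e : S} {p : Q} (hp : act p e = p)
    (s : S) : act p (e * s * e) = act (act p s) e := by
  rw [← hact, hact.act_mul_of_act_eq hp]

theorem RightAction.exists_act_mul_eq_of_reach (hact : RightAction act) {p q : Q} {e s : S}
    (hq : act q e = q) (h : Reach act (act p s) q) : ∃ w, act p (s * w) = q := by
  rcases h with h | ⟨u, hu⟩
  · exact ⟨e, by rw [← hact, h, hq]⟩
  · exact ⟨u, by rw [← hact, hu]⟩

theorem RightAction.exists_idempotent_fixing [Finite S] (hact : RightAction act) {p q : Q} {s : S}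
    (hp : act p (s * s) = p) (hq : act q (s * s) = q) :
    ∃ e : S, e * e = e ∧ act p e = p ∧ act q e = q := by
  obtain ⟨e, ⟨hpe, hqe⟩, he⟩ := exists_idempotent_mem_of_finite
    (s := {t | act p t = p ∧ act q t = q}) ⟨s * s, hp, hq⟩
    fun x ⟨hpx, hqx⟩ y ⟨hpy, hqy⟩ => ⟨by rw [← hact, hpx, hpy], by rw [← hact, hqx, hqy]⟩
  exact ⟨e, he, hpe, hqe⟩

theorem LocIdem.not_exists_swap [Finite S] (hLI : LocIdem S) (hact : RightAction act) :
    ¬ ∃ (p q : Q) (s : S), p ≠ q ∧ act p s = q ∧ act q s = p := by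
  rintro ⟨p, q, s, hpq, hps, hqs⟩
  obtain ⟨e, he, hpe, hqe⟩ := hact.exists_idempotent_fixing (s := s)
    (by rw [← hact, hps, hqs]) (by rw [← hact, hqs, hps])
  have hpt : act p (e * s * e) = q := by rw [hact.act_sandwich hpe, hps, hqe]
  have hqt : act q (e * s * e) = p := by rw [hact.act_sandwich hqe, hqs, hpe]
  have := hact.act_act_of_mul_self_eq (hLI e s he) p
  rw [hpt, hqt] at this
  exact hpq this

theorem LocIdem.reach_act_self (hLI : LocIdem S) (hact : RightAction act) {p q : Q} {e : S}
    (he : e * e = e) (hpe : act p e = p) (hqe : act q e = q) (s : S)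
    (h : Reach act (act p s) q) : Reach act (act q s) q := by
  obtain ⟨w, hw⟩ := hact.exists_act_mul_eq_of_reach hqe h
  have hpt : act p (e * (s * w) * e) = q := by rw [hact.act_sandwich hpe, hw, hqe]
  have hqt : act q (e * (s * w) * e) = q := by
    simpa only [hpt] using hact.act_act_of_mul_self_eq (hLI e (s * w) he) p
  refine Or.inr ⟨w * e, ?_⟩
  rwa [hact, ← mul_assoc, ← hact.act_mul_of_act_eq hqe, ← mul_assoc]

theorem LocIdem.not_exists_chain (hLI : LocIdem S) (hact : RightAction act) :
    ¬ ∃ (p q r : Q) (e s : S), p ≠ q ∧ q ≠ r ∧ p ≠ r ∧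
      e * e = e ∧ act p e = p ∧ act q e = q ∧ act r e = r ∧ act p s = q ∧ act q s = r := by
  rintro ⟨p, q, r, e, s, -, hqr, -, he, hpe, hqe, hre, hps, hqs⟩
  have hpt : act p (e * s * e) = q := by rw [hact.act_sandwich hpe, hps, hqe]
  have hqt : act q (e * s * e) = r := by rw [hact.act_sandwich hqe, hqs, hre]
  have := hact.act_act_of_mul_self_eq (hLI e s he) p
  rw [hpt, hqt] at this
  exact hqr this.symm

theorem RightAction.act_act_eq_of_not_exists_swap_of_not_exists_chain (hact : RightAction act)
    (hswap : ¬ ∃ (p q : Q) (s : S), p ≠ q ∧ act p s = q ∧ act q s = p)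
    (hchain : ¬ ∃ (p q r : Q) (e s : S), p ≠ q ∧ q ≠ r ∧ p ≠ r ∧
      e * e = e ∧ act p e = p ∧ act q e = q ∧ act r e = r ∧ act p s = q ∧ act q s = r)
    {e t : S} (he : e * e = e) (hte : t * e = t) {p : Q} (hpe : act p e = p) :
    act (act p t) t = act p t := by
  have fixed : ∀ x, act (act x t) e = act x t := fun x => by rw [hact, hte]
  by_cases h01 : p = act p t
  · rw [← h01]
    exact h01.symm
  by_cases h12 : act p t = act (act p t) t
  · exact h12.symm
  by_cases h02 : p = act (act p t) t
  · exact absurd ⟨p, act p t, t, h01, rfl, h02.symm⟩ hswap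
  · exact absurd ⟨p, act p t, act (act p t) t, e, t, h01, h12, h02, he, hpe, fixed p,
      fixed _, rfl, rfl⟩ hchain

end RightAction

theorem stmt8_general {Q S : Type*} [Semigroup S] [Fintype S]
    (act : Q → S → Q) (hact : RightAction act)
    (hfaith : ∀ s t : S, (∀ q : Q, act q s = act q t) → s = t) :
    LocIdem S ↔
      ((¬ ∃ (p q : Q) (s : S), p ≠ q ∧ act p s = q ∧ act q s = p) ∧
       (∀ (p q : Q) (e : S), e * e = e → act p e = p → act q e = q →
          ∀ s : S, Reach act (act p s) q → Reach act (act q s) q) ∧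
       (¬ ∃ (p q r : Q) (e s : S), p ≠ q ∧ q ≠ r ∧ p ≠ r ∧
          e * e = e ∧ act p e = p ∧ act q e = q ∧ act r e = r ∧
          act p s = q ∧ act q s = r)) := by
  refine ⟨fun hLI => ⟨hLI.not_exists_swap hact, fun _ _ _ he hpe hqe =>
    hLI.reach_act_self hact he hpe hqe, hLI.not_exists_chain hact⟩, ?_⟩
  rintro ⟨hswap, -, hchain⟩ e s he
  have hte : e * s * e * e = e * s * e := by rw [mul_assoc _ e e, he]
  have het : e * (e * s * e) = e * s * e := by rw [← mul_assoc, ← mul_assoc, he]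
  have hqe : ∀ q, act (act q e) e = act q e := hact.act_act_of_mul_self_eq he
  refine hfaith _ _ fun q => ?_
  have hq : act q (e * s * e) = act (act q e) (e * s * e) := by rw [hact, het]
  rw [← hact, hq,
    hact.act_act_eq_of_not_exists_swap_of_not_exists_chain hswap hchain he hte (hqe q)]

theorem stmt8 {Q S : Type*} [Fintype Q] [Semigroup S] [Fintype S]
    (act : Q → S → Q) (hact : RightAction act)
    (hfaith : ∀ s t : S, (∀ q : Q, act q s = act q t) → s = t) :
    LocIdem S ↔
      ((¬ ∃ (p q : Q) (s : S), p ≠ q ∧ act p s = q ∧ act q s = p) ∧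
       (∀ (p q : Q) (e : S), e * e = e → act p e = p → act q e = q →
          ∀ s : S, Reach act (act p s) q → Reach act (act q s) q) ∧
       (¬ ∃ (p q r : Q) (e s : S), p ≠ q ∧ q ≠ r ∧ p ≠ r ∧
          e * e = e ∧ act p e = p ∧ act q e = q ∧ act r e = r ∧
          act p s = q ∧ act q s = r)) :=
  stmt8_general act hact hfaith
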